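/- arXiv:2109.00959 — 5 statements merged into one kernel-verified Lean document; each statement's English description precedes it below -/
import Mathlib

section
/- Let W^{(1)}, …, W^{(p)} ∈ ℂ^{n×n}, b ∈ ℂ^n, and let X ⊂ ℂ^n be a bounded set. Then there exist bias vectors c^{(1)}, …, c^{(p)} ∈ ℂ^n such that for all x ∈ X: ρ(W^{(p)} ⋯ W^{(1)} x + b) = φ_{W^{(p)},c^{(p)}} ∘ ⋯ ∘ φ_{W^{(1)},c^{(1)}}(x), where φ_{W,c}(x) = ρ(Wx + c) and ρ is the complex ReLU ρ(z) = max(0, Re z) + i·max(0, Im z) applied coordinatewise. -/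
open scoped BigOperators

/-- The complex ReLU applied coordinatewise:
    `ρ(z) = max(0, Re z) + i·max(0, Im z)`. -/
noncomputable def crelu {ι : Type*} (v : ι → ℂ) : ι → ℂ :=
  fun i => (max 0 (v i).re : ℝ) + (max 0 (v i).im : ℝ) * Complex.I

/-!
On a bounded set the first layer `x ↦ W⁽¹⁾ x` takes values in a bounded set, so a
large enough bias `c⁽¹⁾` pushes every coordinate into the closed first quadrant, where `ρ` is the
identity. The first layer is then affine on `X`, and its bias is cancelled by the bias
`b - W⁽ᵖ⁾ ⋯ W⁽²⁾ c⁽¹⁾` handed to the remaining `p - 1` layers, which act on the (again bounded)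
image of `X`.
-/

open Bornology Matrix

theorem crelu_of_nonneg {ι : Type*} {v : ι → ℂ} (h : ∀ i, 0 ≤ (v i).re ∧ 0 ≤ (v i).im) :
    crelu v = v := by
  funext i
  simp [crelu, max_eq_right (h i).1, max_eq_right (h i).2, Complex.re_add_im]

variable {ι : Type*} [Fintype ι]

theorem exists_add_crelu_eq_self {S : Set (ι → ℂ)} (hS : IsBounded S) :
    ∃ c : ι → ℂ, ∀ y ∈ S, crelu (y + c) = y + c := by
  obtain ⟨C, hC⟩ := isBounded_iff_forall_norm_le.1 hS
  refine ⟨fun _ => ⟨C, C⟩, fun y hy => crelu_of_nonneg fun i => ?_⟩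
  have hyi : ‖y i‖ ≤ C := (norm_le_pi_norm y i).trans (hC y hy)
  have hre := (abs_le.1 ((Complex.abs_re_le_norm (y i)).trans hyi)).1
  have him := (abs_le.1 ((Complex.abs_im_le_norm (y i)).trans hyi)).1
  constructor <;> simp only [Pi.add_apply, Complex.add_re, Complex.add_im] <;> linarith

theorem isBounded_image_mulVec [DecidableEq ι] (M : Matrix ι ι ℂ) {X : Set (ι → ℂ)}
    (hX : IsBounded X) : IsBounded ((M *ᵥ ·) '' X) :=
  (LinearMap.toContinuousLinearMap (mulVecLin M)).lipschitz.isBounded_image hX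

theorem isBounded_of_forall_norm_apply_le {X : Set (ι → ℂ)} (R : ℝ)
    (hX : ∀ x ∈ X, ∀ i, ‖x i‖ ≤ R) : IsBounded X :=
  isBounded_iff_forall_norm_le.2 ⟨max R 0, fun x hx =>
    (pi_norm_le_iff_of_nonneg (le_max_right R 0)).2 fun i => (hX x hx i).trans (le_max_left R 0)⟩

theorem prod_reverse_ofFn_succ {M : Type*} [Monoid M] {p : ℕ} (W : Fin (p + 1) → M) :
    (List.ofFn W).reverse.prod = (List.ofFn (Fin.tail W)).reverse.prod * W 0 := by
  simp [List.ofFn_succ, Fin.tail_def]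

theorem exists_biases_foldl_crelu [DecidableEq ι] (p : ℕ) (W : Fin (p + 1) → Matrix ι ι ℂ)
    (b : ι → ℂ) {X : Set (ι → ℂ)} (hX : IsBounded X) :
    ∃ c : Fin (p + 1) → (ι → ℂ), ∀ x ∈ X,
      crelu ((List.ofFn W).reverse.prod *ᵥ x + b) =
        (List.ofFn fun i v => crelu (W i *ᵥ v + c i)).foldl (fun v f => f v) x := by
  induction p generalizing b X with
  | zero => exact ⟨fun _ => b, fun x _ => by simp [List.ofFn_succ]⟩
  | succ p ih =>
    set P := (List.ofFn (Fin.tail W)).reverse.prod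
    have hS := isBounded_image_mulVec (W 0) hX
    obtain ⟨c₀, hc₀⟩ := exists_add_crelu_eq_self hS
    obtain ⟨c, hc⟩ := ih (Fin.tail W) (b - P *ᵥ c₀) (hS.add (isBounded_singleton (x := c₀)))
    refine ⟨Fin.cons c₀ c, fun x hx => ?_⟩
    have hx₁ : W 0 *ᵥ x ∈ (W 0 *ᵥ ·) '' X := Set.mem_image_of_mem _ hx
    have hlin : (List.ofFn W).reverse.prod *ᵥ x + b = P *ᵥ (W 0 *ᵥ x + c₀) + (b - P *ᵥ c₀) := by
      rw [prod_reverse_ofFn_succ, ← mulVec_mulVec, mulVec_add]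
      abel
    rw [hlin, hc _ (Set.add_mem_add hx₁ rfl), List.ofFn_succ (n := p + 1), List.foldl_cons]
    simp only [Fin.cons_zero, Fin.cons_succ, Fin.tail, hc₀ _ hx₁]

/-- A composition of affine maps intertwined with complex ReLUs can simulate a single
    linear map `W⁽ᵖ⁾ ⋯ W⁽¹⁾` followed by a bias and a ReLU on a bounded set, for a
    suitable choice of biases `c⁽¹⁾, …, c⁽ᵖ⁾`. -/
theorem product_to_relu_network (n p : ℕ) (hp : 0 < p)
    (W : Fin p → Matrix (Fin n) (Fin n) ℂ) (b : Fin n → ℂ) (X : Set (Fin n → ℂ))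
    (hX : ∃ R : ℝ, ∀ x ∈ X, ∀ i, ‖x i‖ ≤ R) :
    ∃ c : Fin p → (Fin n → ℂ), ∀ x ∈ X,
      crelu (((List.ofFn W).reverse.prod).mulVec x + b) =
        (List.ofFn (fun i : Fin p => fun v : Fin n → ℂ =>
          crelu ((W i).mulVec v + c i))).foldl (fun v f => f v) x := by
  obtain ⟨q, rfl⟩ := Nat.exists_eq_add_one_of_ne_zero hp.ne'
  obtain ⟨R, hR⟩ := hX
  exact exists_biases_foldl_crelu q W b (isBounded_of_forall_norm_apply_le R hR)
end

section
/- Let x^{(0)} = y^{(0)} ∈ ℂ^n and define recursively x^{(i)} = ρ(W^{(i)} x^{(i-1)} + b^{(i)}) and y^{(i)} = ρ(W̃^{(i)} y^{(i-1)} + b^{(i)}), where W̃^{(i)} is the rank-k SVD truncation of W^{(i)}. Let σ_j^{(max)} = max_i σ_j(W^{(i)}) and let R ≥ ‖x^{(i)}‖_2 for all i. If σ_1^{(max)} = 1, then ‖x^{(p)} − y^{(p)}‖_2 ≤ p·R·σ_{k+1}^{(max)}. If σ_1^{(max)} ≠ 1, then ‖x^{(p)} − y^{(p)}‖_2 ≤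 ((σ_1^{(max)})^p − 1)·R·σ_{k+1}^{(max)} / (σ_1^{(max)} − 1). -/
open scoped BigOperators

/-- Euclidean norm of a complex vector. -/
noncomputable def vnorm {ι : Type*} [Fintype ι] (v : ι → ℂ) : ℝ :=
  Real.sqrt (∑ i, ‖v i‖ ^ 2)

/-!
The error `eᵢ = ‖x⁽ⁱ⁾ - y⁽ⁱ⁾‖` obeys `eᵢ₊₁ ≤ σ_{k+1} R + σ₁ eᵢ`: the complex ReLU is
1-Lipschitz and `W x - W̃ y = (W - W̃) x + W̃ (x - y)`. Unrolling this affine recursion from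
`e₀ = 0` gives `eₚ ≤ R σ_{k+1} (1 + σ₁ + ⋯ + σ₁^{p-1})`, and the geometric sum is `p` or
`(σ₁^p - 1)/(σ₁ - 1)`.
-/

open Finset Matrix

lemma vnorm_eq_norm_toLp {ι : Type*} [Fintype ι] (v : ι → ℂ) :
    vnorm v = ‖WithLp.toLp 2 v‖ := by
  simp [vnorm, EuclideanSpace.norm_eq]

lemma vnorm_add_le {ι : Type*} [Fintype ι] (u v : ι → ℂ) :
    vnorm (u + v) ≤ vnorm u + vnorm v := by
  simpa only [vnorm_eq_norm_toLp, WithLp.toLp_add] using norm_add_le _ _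

lemma vnorm_le_vnorm_of_norm_le {ι : Type*} [Fintype ι] {u v : ι → ℂ} (h : ∀ i, ‖u i‖ ≤ ‖v i‖) :
    vnorm u ≤ vnorm v :=
  Real.sqrt_le_sqrt <| sum_le_sum fun i _ => pow_le_pow_left₀ (norm_nonneg _) (h i) 2

lemma sq_max_zero_sub_max_zero_le (a b : ℝ) : (max 0 a - max 0 b) ^ 2 ≤ (a - b) ^ 2 := by
  simpa only [sq_abs, max_comm _ (0 : ℝ)] using
    pow_le_pow_left₀ (abs_nonneg _) (abs_max_sub_max_le_abs a b 0) 2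

lemma norm_crelu_sub_crelu_le {ι : Type*} (u v : ι → ℂ) (i : ι) :
    ‖crelu u i - crelu v i‖ ≤ ‖u i - v i‖ := by
  simp only [Complex.norm_def, Complex.normSq_apply]
  refine Real.sqrt_le_sqrt ?_
  simpa [crelu, ← sq] using add_le_add (sq_max_zero_sub_max_zero_le (u i).re (v i).re)
    (sq_max_zero_sub_max_zero_le (u i).im (v i).im)

lemma vnorm_crelu_sub_crelu_le {ι : Type*} [Fintype ι] (u v : ι → ℂ) :
    vnorm (crelu u - crelu v) ≤ vnorm (u - v) :=
  vnorm_le_vnorm_of_norm_le (norm_crelu_sub_crelu_le u v)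

lemma vnorm_crelu_layer_sub_le {ι : Type*} [Fintype ι] [DecidableEq ι]
    (A B : Matrix ι ι ℂ) (c u v : ι → ℂ) :
    vnorm (crelu (A *ᵥ u + c) - crelu (B *ᵥ v + c)) ≤
      vnorm ((A - B) *ᵥ u) + vnorm (B *ᵥ (u - v)) :=
  calc vnorm (crelu (A *ᵥ u + c) - crelu (B *ᵥ v + c))
      ≤ vnorm ((A *ᵥ u + c) - (B *ᵥ v + c)) := vnorm_crelu_sub_crelu_le _ _
    _ = vnorm ((A - B) *ᵥ u + B *ᵥ (u - v)) := by
        rw [sub_mulVec, mulVec_sub]; abel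
    _ ≤ vnorm ((A - B) *ᵥ u) + vnorm (B *ᵥ (u - v)) := vnorm_add_le _ _

lemma le_mul_geom_sum_of_le_add_mul {e : ℕ → ℝ} {c s : ℝ} (hs : 0 ≤ s) (h0 : e 0 ≤ 0)
    (hstep : ∀ i, e (i + 1) ≤ c + s * e i) (i : ℕ) :
    e i ≤ c * ∑ j ∈ range i, s ^ j := by
  induction i with
  | zero => simpa using h0
  | succ i ih =>
    calc e (i + 1) ≤ c + s * e i := hstep i
      _ ≤ c + s * (c * ∑ j ∈ range i, s ^ j) := by gcongr
      _ = c * ∑ j ∈ range (i + 1), s ^ j := by rw [geom_sum_succ]; ring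

/-- Error bound for a `p`-layer complex-ReLU network whose weight matrices are replaced
    by their rank-`k` SVD truncations `W̃⁽ⁱ⁾` (so `‖W̃⁽ⁱ⁾‖₂ ≤ σ₁ᵐᵃˣ` and
    `‖W⁽ⁱ⁾ − W̃⁽ⁱ⁾‖₂ ≤ σ_{k+1}ᵐᵃˣ`), with `R` a bound on the norms of the intermediate
    outputs `x⁽ⁱ⁾`. -/
theorem network_low_rank_approximation (n p : ℕ)
    (W Wt : ℕ → Matrix (Fin n) (Fin n) ℂ) (b : ℕ → (Fin n → ℂ))
    (x y : ℕ → (Fin n → ℂ)) (σ1max σk1max R : ℝ)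
    (h0 : x 0 = y 0)
    (hx : ∀ i, x (i + 1) = crelu ((W i).mulVec (x i) + b i))
    (hy : ∀ i, y (i + 1) = crelu ((Wt i).mulVec (y i) + b i))
    (hop : ∀ i, ∀ v : Fin n → ℂ, vnorm ((Wt i).mulVec v) ≤ σ1max * vnorm v)
    (hdiff : ∀ i, ∀ v : Fin n → ℂ, vnorm ((W i - Wt i).mulVec v) ≤ σk1max * vnorm v)
    (hR : ∀ i, vnorm (x i) ≤ R)
    (hσ1 : 0 ≤ σ1max) (hσk : 0 ≤ σk1max) :
    (σ1max = 1 → vnorm (x p - y p) ≤ p * (R * σk1max)) ∧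
    (σ1max ≠ 1 →
      vnorm (x p - y p) ≤ (σ1max ^ p - 1) * R * σk1max / (σ1max - 1)) := by
  have hstep : ∀ i, vnorm (x (i + 1) - y (i + 1)) ≤ R * σk1max + σ1max * vnorm (x i - y i) := by
    intro i
    calc vnorm (x (i + 1) - y (i + 1))
        ≤ vnorm ((W i - Wt i) *ᵥ x i) + vnorm (Wt i *ᵥ (x i - y i)) := by
          rw [hx, hy]; exact vnorm_crelu_layer_sub_le _ _ _ _ _
      _ ≤ σk1max * vnorm (x i) + σ1max * vnorm (x i - y i) := add_le_add (hdiff i _) (hop i _)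
      _ ≤ R * σk1max + σ1max * vnorm (x i - y i) := by
          rw [mul_comm R]; gcongr; exact hR i
  have herr := le_mul_geom_sum_of_le_add_mul (e := fun i => vnorm (x i - y i)) hσ1
    (by simp [h0, vnorm_eq_norm_toLp]) hstep p
  refine ⟨fun h1 => by simpa [h1, mul_comm] using herr, fun h1 => ?_⟩
  rw [geom_sum_eq h1] at herr
  calc vnorm (x p - y p) ≤ R * σk1max * ((σ1max ^ p - 1) / (σ1max - 1)) := herr
    _ = (σ1max ^ p - 1) * R * σk1max / (σ1max - 1) := by ring
end

section
/- Let D(f₁), …, D(f_c) be n²×n² doubly-block Toeplitz matrices generated by trigonometric polynomials f₁, …, f_c: ℝ² → ℂ, and let M be the (c·n²)×n² matrix formed by vertically stacking them: M = [D(f₁)ᵀ, …, D(f_c)ᵀ]ᵀ. Then σ_1(M) ≤ sup_{(ω₁,ω₂) ∈ [0,2π]²} sqrt(Σ_{i=1}^{c} |f_i(ω₁,ω₂)|²). -/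
/-! Sample on the `N × N` grid `2π j / N` with `N ≥ 2n - 1` and let `W` be the normalized DFT
`ℂ^{n²} → ℂ^{N²}`, whose columns are orthonormal grid characters. Since all frequencies involved
differ by less than `N`, there is no aliasing and `D(f) = Wᴴ Λ_f W`, where `Λ_f` multiplies by the
samples of `f`. Hence, by Bessel's inequality for `Wᴴ`,
`‖M v‖² = ∑ᵢ ‖Wᴴ Λ_{fᵢ} W v‖² ≤ ∑ᵢ ‖Λ_{fᵢ} W v‖² ≤ (max over the grid of ∑ᵢ |fᵢ|²) ‖W v‖²`,
and `‖W v‖ = ‖v‖`. -/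

open scoped BigOperators

/-- Largest singular value (ℓ²→ℓ² operator norm) of a complex matrix. -/
noncomputable def sval1 {ι κ : Type*} [Fintype ι] [Fintype κ] (A : Matrix ι κ ℂ) : ℝ :=
  ⨆ v : {v : κ → ℂ // vnorm v ≤ 1}, vnorm (A.mulVec v.1)

/-- The `n² × n²` doubly-block Toeplitz matrix with real coefficients `d`. -/
def dbToep (n : ℕ) (d : ℤ → ℤ → ℝ) : Matrix (Fin n × Fin n) (Fin n × Fin n) ℂ :=
  Matrix.of fun p q => ((d ((q.1 : ℤ) - (p.1 : ℤ)) ((q.2 : ℤ) - (p.2 : ℤ)) : ℝ) : ℂ)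

/-- The generating multivariate trigonometric polynomial of `dbToep n d`. -/
noncomputable def genPoly (n : ℕ) (d : ℤ → ℤ → ℝ) (ω₁ ω₂ : ℝ) : ℂ :=
  ∑ h₁ ∈ Finset.Icc (-(n : ℤ) + 1) ((n : ℤ) - 1),
    ∑ h₂ ∈ Finset.Icc (-(n : ℤ) + 1) ((n : ℤ) - 1),
      ((d h₁ h₂ : ℝ) : ℂ) * Complex.exp (Complex.I * ((h₁ : ℂ) * (ω₁ : ℂ) + (h₂ : ℂ) * (ω₂ : ℂ)))

open Complex Finset
open scoped Real ComplexConjugate InnerProductSpace Matrix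

noncomputable def dftChar (N : ℕ) (k : ℤ) (j : Fin N) : ℂ :=
  cexp (-(2 * π * I * k * j / N))

lemma dftChar_add (N : ℕ) (a b : ℤ) (j : Fin N) :
    dftChar N (a + b) j = dftChar N a j * dftChar N b j := by
  rw [dftChar, dftChar, dftChar, ← Complex.exp_add]
  congr 1
  push_cast
  ring

lemma conj_dftChar (N : ℕ) (k : ℤ) (j : Fin N) : conj (dftChar N k j) = dftChar N (-k) j := by
  rw [dftChar, dftChar, ← Complex.exp_conj]
  congr 1
  simp only [map_neg, map_div₀, map_mul, map_ofNat, conj_ofReal, conj_I, map_intCast, map_natCast]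
  push_cast
  ring

lemma sum_dftChar {N : ℕ} {k : ℤ} (hk : |k| < N) :
    ∑ j : Fin N, dftChar N k j = if k = 0 then (N : ℂ) else 0 := by
  have hN : N ≠ 0 := by rintro rfl; exact (abs_nonneg k).not_gt hk
  set z := cexp (2 * π * I / N) ^ (-k)
  have hζ := Complex.isPrimitiveRoot_exp N hN
  have hpow : ∀ j : Fin N, dftChar N k j = z ^ (j : ℕ) := fun j => by
    rw [dftChar, ← zpow_natCast, ← zpow_mul, ← Complex.exp_int_mul]
    congr 1
    push_cast
    ring
  simp_rw [hpow, Fin.sum_univ_eq_sum_range (z ^ ·)]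
  split_ifs with hk0
  · simp [z, hk0]
  · have hz1 : z ≠ 1 := fun h => hk0 <| neg_eq_zero.1 <|
      Int.eq_zero_of_abs_lt_dvd ((hζ.zpow_eq_one_iff_dvd _).1 h) (by rwa [abs_neg])
    have hzN : z ^ N = 1 := by
      rw [← zpow_natCast, ← zpow_mul, mul_comm (-k), zpow_mul, zpow_natCast, hζ.pow_eq_one,
        one_zpow]
    rw [geom_sum_eq hz1, hzN, sub_self, zero_div]

lemma sum_conj_dftChar_mul {N : ℕ} {a b : ℤ} (h : |b - a| < N) :
    ∑ j : Fin N, conj (dftChar N a j) * dftChar N b j = if a = b then (N : ℂ) else 0 := by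
  simp_rw [conj_dftChar, ← dftChar_add, neg_add_eq_sub, sum_dftChar h, sub_eq_zero, eq_comm]

noncomputable def gridChar (N : ℕ) (a b : ℤ) : EuclideanSpace ℂ (Fin N × Fin N) :=
  WithLp.toLp 2 fun j => (N : ℂ)⁻¹ * (dftChar N a j.1 * dftChar N b j.2)

lemma inner_gridChar {N : ℕ} {a b a' b' : ℤ} (ha : |a' - a| < N) (hb : |b' - b| < N) :
    ⟪gridChar N a b, gridChar N a' b'⟫_ℂ = if a = a' ∧ b = b' then 1 else 0 := by
  have hN : (N : ℂ) ≠ 0 := by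
    rw [Nat.cast_ne_zero]; rintro rfl; exact (abs_nonneg _).not_gt ha
  calc ⟪gridChar N a b, gridChar N a' b'⟫_ℂ
      = (N : ℂ)⁻¹ ^ 2 * ((∑ j, conj (dftChar N a j) * dftChar N a' j) *
          ∑ j, conj (dftChar N b j) * dftChar N b' j) := by
        rw [sum_mul_sum, mul_sum]
        simp only [gridChar, PiLp.inner_apply, RCLike.inner_apply', Fintype.sum_prod_type,
          mul_sum, map_mul, map_inv₀, map_natCast]
        refine sum_congr rfl fun _ _ => sum_congr rfl fun _ _ => by ring
    _ = if a = a' ∧ b = b' then 1 else 0 := by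
        rw [sum_conj_dftChar_mul ha, sum_conj_dftChar_mul hb]
        split_ifs <;> field_simp <;> simp_all

lemma abs_fin_sub_lt {n N : ℕ} (h : n ≤ N) (p q : Fin n) : |(q : ℤ) - p| < N := by
  have := p.isLt; have := q.isLt; rw [abs_sub_lt_iff]; omega

lemma orthonormal_gridChar {n N : ℕ} (h : n ≤ N) :
    Orthonormal ℂ fun q : Fin n × Fin n => gridChar N q.1 q.2 := by
  rw [orthonormal_iff_ite]
  rintro ⟨p₁, p₂⟩ ⟨q₁, q₂⟩
  rw [inner_gridChar (abs_fin_sub_lt h _ _) (abs_fin_sub_lt h _ _)]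
  simp [Prod.ext_iff, Fin.ext_iff]

noncomputable def dft (N : ℕ) {n : ℕ} (v : Fin n × Fin n → ℂ) : EuclideanSpace ℂ (Fin N × Fin N) :=
  ∑ q, v q • gridChar N q.1 q.2

lemma norm_dft {n N : ℕ} (h : n ≤ N) (v : Fin n × Fin n → ℂ) : ‖dft N v‖ = vnorm v := by
  rw [vnorm, ← Real.sqrt_sq (norm_nonneg _), @norm_sq_eq_re_inner ℂ, dft,
    (orthonormal_gridChar h).inner_sum]
  simp [Complex.conj_mul', ← Complex.ofReal_pow]

noncomputable def gridPt (N : ℕ) (j : Fin N) : ℝ := 2 * π * j / N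

lemma gridPt_mem_Icc {N : ℕ} (j : Fin N) : gridPt N j ∈ Set.Icc 0 (2 * π) := by
  have hj : (j : ℝ) / N ≤ 1 := div_le_one_of_le₀ (by exact_mod_cast j.isLt.le) (Nat.cast_nonneg N)
  refine ⟨by unfold gridPt; positivity, ?_⟩
  rw [gridPt, mul_div_assoc]
  exact mul_le_of_le_one_right (by positivity) hj

noncomputable def gridMul (N : ℕ) (f : ℝ → ℝ → ℂ) :
    EuclideanSpace ℂ (Fin N × Fin N) →ₗ[ℂ] EuclideanSpace ℂ (Fin N × Fin N) :=
  Matrix.toLpLin 2 2 (Matrix.diagonal fun j => f (gridPt N j.1) (gridPt N j.2))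

lemma gridMul_apply (N : ℕ) (f : ℝ → ℝ → ℂ) (x : EuclideanSpace ℂ (Fin N × Fin N))
    (j : Fin N × Fin N) : gridMul N f x j = f (gridPt N j.1) (gridPt N j.2) * x j := by
  simp [gridMul, Matrix.toLpLin_apply, Matrix.mulVec_diagonal]

lemma genPoly_gridPt (n N : ℕ) (d : ℤ → ℤ → ℝ) (j₁ j₂ : Fin N) :
    genPoly n d (gridPt N j₁) (gridPt N j₂) =
      ∑ h₁ ∈ Icc (-(n : ℤ) + 1) ((n : ℤ) - 1), ∑ h₂ ∈ Icc (-(n : ℤ) + 1) ((n : ℤ) - 1),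
        (d h₁ h₂ : ℂ) * (dftChar N (-h₁) j₁ * dftChar N (-h₂) j₂) := by
  refine sum_congr rfl fun h₁ _ => sum_congr rfl fun h₂ _ => ?_
  rw [dftChar, dftChar, ← Complex.exp_add, gridPt, gridPt]
  congr 2
  push_cast
  ring

lemma gridMul_genPoly_gridChar (n N : ℕ) (d : ℤ → ℤ → ℝ) (a b : ℤ) :
    gridMul N (genPoly n d) (gridChar N a b) =
      ∑ h₁ ∈ Icc (-(n : ℤ) + 1) ((n : ℤ) - 1), ∑ h₂ ∈ Icc (-(n : ℤ) + 1) ((n : ℤ) - 1),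
        (d h₁ h₂ : ℂ) • gridChar N (a - h₁) (b - h₂) := by
  ext j
  simp only [gridMul_apply, genPoly_gridPt, gridChar, sum_mul, WithLp.ofLp_sum, WithLp.ofLp_smul,
    Finset.sum_apply, Pi.smul_apply, smul_eq_mul, sub_eq_neg_add, dftChar_add]
  refine sum_congr rfl fun _ _ => sum_congr rfl fun _ _ => by ring

lemma dbToep_mulVec_eq_inner {n N : ℕ} (hN : 2 * n ≤ N + 1) (d : ℤ → ℤ → ℝ)
    (v : Fin n × Fin n → ℂ) (p : Fin n × Fin n) :
    (dbToep n d *ᵥ v) p = ⟪gridChar N p.1 p.2, gridMul N (genPoly n d) (dft N v)⟫_ℂ := by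
  have hp₁ := p.1.isLt; have hp₂ := p.2.isLt
  have hentry : ∀ q : Fin n × Fin n,
      ⟪gridChar N p.1 p.2, gridMul N (genPoly n d) (gridChar N q.1 q.2)⟫_ℂ =
        d (q.1 - p.1) (q.2 - p.2) := fun q => by
    have hq₁ := q.1.isLt; have hq₂ := q.2.isLt
    calc _ = ∑ h₁ ∈ Icc (-(n : ℤ) + 1) ((n : ℤ) - 1), ∑ h₂ ∈ Icc (-(n : ℤ) + 1) ((n : ℤ) - 1),
            if h₁ = q.1 - p.1 ∧ h₂ = q.2 - p.2 then (d h₁ h₂ : ℂ) else 0 := by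
          simp only [gridMul_genPoly_gridChar, inner_sum, inner_smul_right]
          refine sum_congr rfl fun h₁ hh₁ => sum_congr rfl fun h₂ hh₂ => ?_
          rw [mem_Icc] at hh₁ hh₂
          -- no aliasing: `q - h - p` has coordinates of size at most `2n - 2 < N`
          rw [inner_gridChar (by rw [abs_lt]; omega) (by rw [abs_lt]; omega), mul_ite, mul_one,
            mul_zero]
          congr 1
          apply propext
          omega
      _ = d (q.1 - p.1) (q.2 - p.2) := by
          simp only [ite_and, sum_ite_irrel, sum_const_zero, sum_ite_eq']
          rw [if_pos (mem_Icc.2 ⟨by omega, by omega⟩), if_pos (mem_Icc.2 ⟨by omega, by omega⟩)]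
  simp only [dft, map_sum, map_smul, inner_sum, inner_smul_right, hentry, Matrix.mulVec,
    dotProduct, dbToep, Matrix.of_apply, mul_comm]

lemma sum_norm_sq_gridMul_le {γ : Type*} [Fintype γ] {N : ℕ} (f : γ → ℝ → ℝ → ℂ) {S : ℝ}
    (hS : ∀ j : Fin N × Fin N, ∑ i, ‖f i (gridPt N j.1) (gridPt N j.2)‖ ^ 2 ≤ S)
    (x : EuclideanSpace ℂ (Fin N × Fin N)) :
    ∑ i, ‖gridMul N (f i) x‖ ^ 2 ≤ S * ‖x‖ ^ 2 := by
  simp only [EuclideanSpace.norm_sq_eq, gridMul_apply, norm_mul, mul_pow]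
  rw [sum_comm, mul_sum]
  exact sum_le_sum fun j _ => by
    rw [← sum_mul]; exact mul_le_mul_of_nonneg_right (hS j) (sq_nonneg _)

lemma vnorm_sq_eq_sum {ι : Type*} [Fintype ι] (v : ι → ℂ) : vnorm v ^ 2 = ∑ i, ‖v i‖ ^ 2 :=
  Real.sq_sqrt (sum_nonneg fun _ _ => sq_nonneg _)

lemma vnorm_sq_stack_mulVec {γ ι κ : Type*} [Fintype γ] [Fintype ι] [Fintype κ]
    (A : γ → Matrix ι κ ℂ) (v : κ → ℂ) :
    vnorm ((Matrix.of fun (r : γ × ι) q => A r.1 r.2 q) *ᵥ v) ^ 2 = ∑ i, vnorm (A i *ᵥ v) ^ 2 := by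
  simp only [vnorm_sq_eq_sum, Fintype.sum_prod_type]
  rfl

lemma sval1_le_of_vnorm_sq_le {ι κ : Type*} [Fintype ι] [Fintype κ] {A : Matrix ι κ ℂ} {R : ℝ}
    (hR : 0 ≤ R) (h : ∀ v, vnorm (A *ᵥ v) ^ 2 ≤ R ^ 2 * vnorm v ^ 2) : sval1 A ≤ R := by
  refine Real.iSup_le (fun ⟨v, hv⟩ => ?_) hR
  refine (pow_le_pow_iff_left₀ (Real.sqrt_nonneg _) hR two_ne_zero).1 ((h v).trans ?_)
  have : vnorm v ^ 2 ≤ 1 := pow_le_one₀ (Real.sqrt_nonneg _) hv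
  nlinarith

lemma sum_vnorm_sq_dbToep_mulVec_le {γ : Type*} [Fintype γ] {n N : ℕ} (hN : 2 * n ≤ N + 1)
    (d : γ → ℤ → ℤ → ℝ) {S : ℝ}
    (hS : ∀ j : Fin N × Fin N, ∑ i, ‖genPoly n (d i) (gridPt N j.1) (gridPt N j.2)‖ ^ 2 ≤ S)
    (v : Fin n × Fin n → ℂ) :
    ∑ i, vnorm (dbToep n (d i) *ᵥ v) ^ 2 ≤ S * vnorm v ^ 2 :=
  calc ∑ i, vnorm (dbToep n (d i) *ᵥ v) ^ 2
      = ∑ i, ∑ p : Fin n × Fin n,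
          ‖⟪gridChar N p.1 p.2, gridMul N (genPoly n (d i)) (dft N v)⟫_ℂ‖ ^ 2 := by
        simp only [vnorm_sq_eq_sum, dbToep_mulVec_eq_inner hN]
    _ ≤ ∑ i, ‖gridMul N (genPoly n (d i)) (dft N v)‖ ^ 2 :=
        sum_le_sum fun i _ => (orthonormal_gridChar (by omega)).sum_inner_products_le _
    _ ≤ S * vnorm v ^ 2 := by
        rw [← norm_dft (N := N) (by omega) v]
        exact sum_norm_sq_gridMul_le _ hS _

/-- Bound on the largest singular value of vertically stacked doubly-block Toeplitz
    matrices `M = [D(f₁)ᵀ, …, D(f_c)ᵀ]ᵀ`: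
    `σ₁(M) ≤ sup_{(ω₁,ω₂) ∈ [0,2π]²} √(∑ᵢ |fᵢ(ω₁,ω₂)|²)`. -/
theorem stacked_doubly_block_toeplitz_sval_bound (n c : ℕ) (d : Fin c → ℤ → ℤ → ℝ) :
    sval1 (Matrix.of fun (p : Fin c × (Fin n × Fin n)) (q : Fin n × Fin n) =>
        dbToep n (d p.1) p.2 q) ≤
      ⨆ ω : Set.Icc (0 : ℝ) (2 * Real.pi) × Set.Icc (0 : ℝ) (2 * Real.pi),
        Real.sqrt (∑ i : Fin c, ‖genPoly n (d i) ω.1 ω.2‖ ^ 2) := by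
  set R := ⨆ ω : Set.Icc (0 : ℝ) (2 * Real.pi) × Set.Icc (0 : ℝ) (2 * Real.pi),
    Real.sqrt (∑ i : Fin c, ‖genPoly n (d i) ω.1 ω.2‖ ^ 2)
  have hR : 0 ≤ R := Real.iSup_nonneg fun _ => Real.sqrt_nonneg _
  have hbdd : BddAbove (Set.range fun ω : Set.Icc (0 : ℝ) (2 * π) × Set.Icc (0 : ℝ) (2 * π) =>
      Real.sqrt (∑ i : Fin c, ‖genPoly n (d i) ω.1 ω.2‖ ^ 2)) :=
    (isCompact_range (by unfold genPoly; fun_prop)).bddAbove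
  have hgrid : ∀ j : Fin (2 * n) × Fin (2 * n),
      ∑ i, ‖genPoly n (d i) (gridPt _ j.1) (gridPt _ j.2)‖ ^ 2 ≤ R ^ 2 := fun j =>
    (Real.sqrt_le_left hR).1 <|
      le_ciSup hbdd (⟨_, gridPt_mem_Icc j.1⟩, ⟨_, gridPt_mem_Icc j.2⟩)
  refine sval1_le_of_vnorm_sq_le hR fun v => ?_
  rw [vnorm_sq_stack_mulVec fun i => dbToep n (d i)]
  exact sum_vnorm_sq_dbToep_mulVec_le (by omega) d hgrid v
end

section
/- Let D(f_{i,j}) for i ∈ [cin], j ∈ [cout] be n²×n² doubly-block Toeplitz matrices generated by trigonometric polynomials f_{i,j}: ℝ² → ℂ, and let M be the (cin·n²)×(cout·n²) block matrix with block (i,j) equal to D(f_{i,j}). Then σ_1(M) ≤ sqrt(Σ_{j=1}^{cout} sup_{(ω₁,ω₂) ∈ [0,2π]²} Σ_{i=1}^{cin} |f_{i,j}(ω₁,ω₂)|²). -/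
open scoped BigOperators

/-!
Embed the `n × n` grid in the torus `(ℤ/N)²` with `N ≥ 2n - 1` and extend vectors by zero:
each Toeplitz block `D(f_{ij})` becomes the compression of a circulant filter, and the
characters of the torus diagonalise all these filters at once. At a character `ψ` the
block matrix acts on the Fourier coefficients as the `cin × cout` matrix `(f_{ij}(ω_ψ))` for
some `ω_ψ ∈ [0, 2π]²`, so by Cauchy–Schwarz it scales the energy at `ψ` by at most
`∑_{i,j} |f_{ij}(ω_ψ)|² ≤ ∑_j sup_ω ∑_i |f_{ij}(ω)|²`. Parseval sums this over `ψ`.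
-/

open Finset ComplexConjugate
open scoped Matrix

lemma norm_sum_mul_sq_le {ι R : Type*} [SeminormedRing R] (s : Finset ι) (a b : ι → R) :
    ‖∑ j ∈ s, a j * b j‖ ^ 2 ≤ (∑ j ∈ s, ‖a j‖ ^ 2) * ∑ j ∈ s, ‖b j‖ ^ 2 :=
  calc ‖∑ j ∈ s, a j * b j‖ ^ 2 ≤ (∑ j ∈ s, ‖a j‖ * ‖b j‖) ^ 2 := by
        gcongr
        exact (norm_sum_le _ _).trans (sum_le_sum fun j _ => norm_mul_le _ _)
    _ ≤ (∑ j ∈ s, ‖a j‖ ^ 2) * ∑ j ∈ s, ‖b j‖ ^ 2 := sum_mul_sq_le_sq_mul_sq _ _ _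

namespace AddChar

variable {G : Type*} [AddCommGroup G] [Fintype G]

noncomputable def dft (f : G → ℂ) (ψ : AddChar G ℂ) : ℂ := ∑ x, conj (ψ x) * f x

lemma sum_norm_dft_sq (f : G → ℂ) :
    ∑ ψ, ‖dft f ψ‖ ^ 2 = Fintype.card G * ∑ x, ‖f x‖ ^ 2 := by
  classical
  suffices h : ((∑ ψ, ‖dft f ψ‖ ^ 2 : ℝ) : ℂ) = Fintype.card G * ∑ x, ((‖f x‖ ^ 2 : ℝ) : ℂ) by
    exact_mod_cast h
  calc ((∑ ψ, ‖dft f ψ‖ ^ 2 : ℝ) : ℂ) = ∑ ψ, dft f ψ * conj (dft f ψ) := by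
        push_cast; simp only [Complex.mul_conj']
    _ = ∑ ψ : AddChar G ℂ, ∑ x, ∑ y, f x * conj (f y) * ψ (y - x) := by
        refine sum_congr rfl fun ψ _ => ?_
        simp only [dft, map_sum, map_mul, Complex.conj_conj]
        rw [sum_mul_sum]
        refine sum_congr rfl fun x _ => sum_congr rfl fun y _ => ?_
        rw [sub_eq_add_neg, map_add_eq_mul, map_neg_eq_conj]
        ring
    _ = ∑ x, ∑ y, f x * conj (f y) * ∑ ψ : AddChar G ℂ, ψ (y - x) := by
        simp only [mul_sum]
        rw [sum_comm]
        exact sum_congr rfl fun x _ => sum_comm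
    _ = Fintype.card G * ∑ x, ((‖f x‖ ^ 2 : ℝ) : ℂ) := by
        simp only [sum_apply_eq_ite, sub_eq_zero, mul_ite, mul_zero, sum_ite_eq', mem_univ,
          if_true, Complex.mul_conj', mul_sum]
        push_cast
        exact sum_congr rfl fun x _ => mul_comm _ _

lemma dft_comp_add_right (f : G → ℂ) (g : G) (ψ : AddChar G ℂ) :
    dft (fun x => f (x + g)) ψ = ψ g * dft f ψ := by
  rw [dft, dft, mul_sum]
  refine Fintype.sum_equiv (Equiv.addRight g) _ _ fun x => ?_
  simp only [Equiv.coe_addRight, ← map_neg_eq_conj, ← mul_assoc, ← map_add_eq_mul]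
  congr 2
  abel

lemma dft_sum {ι : Type*} (s : Finset ι) (f : ι → G → ℂ) (ψ : AddChar G ℂ) :
    dft (fun x => ∑ j ∈ s, f j x) ψ = ∑ j ∈ s, dft (f j) ψ := by
  simp only [dft, mul_sum]
  exact sum_comm

lemma dft_const_mul (c : ℂ) (f : G → ℂ) (ψ : AddChar G ℂ) :
    dft (fun x => c * f x) ψ = c * dft f ψ := by
  simp only [dft, mul_sum]
  exact sum_congr rfl fun x _ => mul_left_comm _ _ _

variable {H : Type*}

lemma dft_filter (S : Finset H) (a : H → ℂ) (g : H → G) (f : G → ℂ) (ψ : AddChar G ℂ) :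
    dft (fun x => ∑ h ∈ S, a h * f (x + g h)) ψ = (∑ h ∈ S, a h * ψ (g h)) * dft f ψ := by
  simp only [dft_sum, dft_const_mul, dft_comp_add_right, sum_mul, mul_assoc]

lemma sum_norm_sq_filter_le {ι κ : Type*} [Fintype ι] [Fintype κ] (S : Finset H) (g : H → G)
    (a : ι → κ → H → ℂ) (f : κ → G → ℂ) {B : ℝ}
    (hB : ∀ ψ : AddChar G ℂ, ∑ i, ∑ j, ‖∑ h ∈ S, a i j h * ψ (g h)‖ ^ 2 ≤ B) :
    ∑ i, ∑ x, ‖∑ j, ∑ h ∈ S, a i j h * f j (x + g h)‖ ^ 2 ≤ B * ∑ j, ∑ x, ‖f j x‖ ^ 2 := by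
  have hcard : (0 : ℝ) < Fintype.card G := Nat.cast_pos.2 Fintype.card_pos
  refine le_of_mul_le_mul_left ?_ hcard
  calc (Fintype.card G : ℝ) * ∑ i, ∑ x, ‖∑ j, ∑ h ∈ S, a i j h * f j (x + g h)‖ ^ 2
      = ∑ i, ∑ ψ, ‖dft (fun x => ∑ j, ∑ h ∈ S, a i j h * f j (x + g h)) ψ‖ ^ 2 := by
        rw [mul_sum]
        exact sum_congr rfl fun i _ => (sum_norm_dft_sq _).symm
    _ = ∑ ψ : AddChar G ℂ, ∑ i, ‖∑ j, (∑ h ∈ S, a i j h * ψ (g h)) * dft (f j) ψ‖ ^ 2 := by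
        rw [sum_comm]
        simp only [dft_sum (s := univ), dft_filter]
    _ ≤ ∑ ψ : AddChar G ℂ, B * ∑ j, ‖dft (f j) ψ‖ ^ 2 := by
        refine sum_le_sum fun ψ _ => ?_
        refine (sum_le_sum fun i _ => norm_sum_mul_sq_le _ _ _).trans ?_
        rw [← sum_mul]
        gcongr
        exact hB ψ
    _ = Fintype.card G * (B * ∑ j, ∑ x, ‖f j x‖ ^ 2) := by
        rw [← mul_sum, sum_comm]
        simp only [sum_norm_dft_sq, ← mul_sum]
        ring

end AddChar

section Compression

open Function

lemma Function.Injective.sum_comp_le {X G M : Type*} [Fintype X] [Fintype G] [AddCommMonoid M]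
    [PartialOrder M] [IsOrderedAddMonoid M] {e : X → G} (he : Injective e) {f : G → M}
    (hf : ∀ x, 0 ≤ f x) : ∑ p, f (e p) ≤ ∑ x, f x :=
  calc ∑ p, f (e p) = ∑ x ∈ univ.map ⟨e, he⟩, f x := by rw [sum_map]; rfl
    _ ≤ ∑ x, f x := sum_le_univ_sum_of_nonneg hf

variable {X H G : Type*} [AddCommGroup H] [AddCommGroup G]
  {φ : H →+ G} {pos : X → H} {S : Finset H}

lemma injective_comp_of_sub_mem (hpos : Injective pos) (hS : ∀ p q, pos q - pos p ∈ S)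
    (hφ : Set.InjOn φ S) : Injective (φ ∘ pos) := by
  intro p q hpq
  have h : φ (pos p - pos q) = φ (pos q - pos q) := by
    simp only [comp_apply] at hpq
    rw [map_sub, map_sub, hpq]
  exact hpos (sub_eq_zero.1 ((hφ (hS q p) (hS q q) h).trans (sub_self _)))

lemma sum_mul_extend_add_eq [Fintype X] (hpos : Injective pos) (hS : ∀ p q, pos q - pos p ∈ S)
    (hφ : Set.InjOn φ S) (a : H → ℂ) (v : X → ℂ) (p : X) :
    ∑ h ∈ S, a h * extend (φ ∘ pos) v 0 (φ (pos p) + φ h) = ∑ q, a (pos q - pos p) * v q := by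
  have hinj := injective_comp_of_sub_mem hpos hS hφ
  symm
  refine sum_of_injOn (fun q => pos q - pos p) (fun q _ q' _ h => hpos (sub_left_inj.1 h))
    (fun q _ => hS p q) (fun h hh hnot => ?_) (fun q _ => ?_)
  · rw [extend_apply' _ _ _ ?_, Pi.zero_apply, mul_zero]
    rintro ⟨q, hq⟩
    refine hnot ⟨q, mem_coe.2 (mem_univ q), hφ (hS p q) hh ?_⟩
    simp only [comp_apply] at hq
    rw [map_sub, hq, add_sub_cancel_left]
  · rw [map_sub, add_sub_cancel, ← comp_apply (f := φ), hinj.extend_apply]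

variable [Fintype X] [Fintype G]

lemma sum_norm_sq_toeplitz_le {ι κ : Type*} [Fintype ι] [Fintype κ]
    (hpos : Injective pos) (hS : ∀ p q, pos q - pos p ∈ S) (hφ : Set.InjOn φ S)
    (a : ι → κ → H → ℂ) (v : κ → X → ℂ) {B : ℝ}
    (hB : ∀ ψ : AddChar G ℂ, ∑ i, ∑ j, ‖∑ h ∈ S, a i j h * ψ (φ h)‖ ^ 2 ≤ B) :
    ∑ i, ∑ p, ‖∑ j, ∑ q, a i j (pos q - pos p) * v j q‖ ^ 2 ≤ B * ∑ j, ∑ q, ‖v j q‖ ^ 2 := by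
  have hinj := injective_comp_of_sub_mem hpos hS hφ
  set w : κ → G → ℂ := fun j => extend (φ ∘ pos) (v j) 0
  have hw : ∀ j, ∑ x, ‖w j x‖ ^ 2 = ∑ q, ‖v j q‖ ^ 2 := fun j =>
    (Fintype.sum_of_injective _ hinj _ _ (fun x hx => by simp [w, extend_apply' _ _ _ hx])
      fun q => by simp only [w, hinj.extend_apply]).symm
  calc ∑ i, ∑ p, ‖∑ j, ∑ q, a i j (pos q - pos p) * v j q‖ ^ 2
      = ∑ i, ∑ p, ‖∑ j, ∑ h ∈ S, a i j h * w j ((φ ∘ pos) p + φ h)‖ ^ 2 := by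
        simp only [comp_apply, w, sum_mul_extend_add_eq hpos hS hφ]
    _ ≤ ∑ i, ∑ x, ‖∑ j, ∑ h ∈ S, a i j h * w j (x + φ h)‖ ^ 2 :=
        sum_le_sum fun i _ =>
          hinj.sum_comp_le (f := fun x => ‖∑ j, ∑ h ∈ S, a i j h * w j (x + φ h)‖ ^ 2)
            fun x => by positivity
    _ ≤ B * ∑ j, ∑ x, ‖w j x‖ ^ 2 := AddChar.sum_norm_sq_filter_le S φ a w hB
    _ = B * ∑ j, ∑ q, ‖v j q‖ ^ 2 := by simp only [hw]

end Compression

lemma ZMod.intCast_injOn_Icc {N : ℕ} {a b : ℤ} (hab : b - a < N) :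
    Set.InjOn (Int.cast : ℤ → ZMod N) (Set.Icc a b) := by
  intro x hx y hy hxy
  rw [ZMod.intCast_eq_intCast_iff_dvd_sub] at hxy
  have hlt : |y - x| < N := by
    rw [abs_lt]
    constructor <;> linarith [hx.1, hx.2, hy.1, hy.2]
  linarith [Int.eq_zero_of_abs_lt_dvd hxy hlt]

open Complex in
lemma AddChar.exists_apply_zsmul_eq_exp {G : Type*} [AddCommGroup G] [Finite G]
    (ψ : AddChar G ℂ) (a : G) :
    ∃ ω ∈ Set.Icc 0 (2 * Real.pi), ∀ h : ℤ, ψ (h • a) = exp (I * (h * ω)) := by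
  have hper : Function.Periodic (fun x : ℝ => exp (x * I)) (2 * Real.pi) := fun x => by
    simp only [ofReal_add, ofReal_mul, ofReal_ofNat, add_mul, exp_add, exp_two_pi_mul_I, mul_one]
  obtain ⟨ω, hω, hexp⟩ := hper.exists_mem_Ico₀ Real.two_pi_pos (arg (ψ a))
  have hψa : ψ a = exp (ω * I) := by
    simpa [← hexp] using (norm_mul_exp_arg_mul_I (ψ a)).symm
  refine ⟨ω, Set.Ico_subset_Icc_self hω, fun h => ?_⟩
  rw [map_zsmul_eq_zpow, hψa, ← exp_int_mul]
  ring_nf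

noncomputable def lagBox (n : ℕ) : Finset (ℤ × ℤ) :=
  Finset.Icc (-(n : ℤ) + 1) ((n : ℤ) - 1) ×ˢ Finset.Icc (-(n : ℤ) + 1) ((n : ℤ) - 1)

lemma exists_sum_lagBox_eq_genPoly {G : Type*} [AddCommGroup G] [Finite G] (φ : ℤ × ℤ →+ G)
    (ψ : AddChar G ℂ) (n : ℕ) :
    ∃ ω : Set.Icc (0 : ℝ) (2 * Real.pi) × Set.Icc (0 : ℝ) (2 * Real.pi), ∀ d : ℤ → ℤ → ℝ,
      ∑ h ∈ lagBox n, (d h.1 h.2 : ℂ) * ψ (φ h) = genPoly n d ω.1 ω.2 := by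
  obtain ⟨ω₁, hω₁, h₁⟩ := ψ.exists_apply_zsmul_eq_exp (φ (1, 0))
  obtain ⟨ω₂, hω₂, h₂⟩ := ψ.exists_apply_zsmul_eq_exp (φ (0, 1))
  refine ⟨(⟨ω₁, hω₁⟩, ⟨ω₂, hω₂⟩), fun d => ?_⟩
  rw [genPoly, lagBox, sum_product]
  refine sum_congr rfl fun k₁ _ => sum_congr rfl fun k₂ _ => ?_
  have hφ : φ (k₁, k₂) = k₁ • φ (1, 0) + k₂ • φ (0, 1) := by
    rw [← map_zsmul, ← map_zsmul, ← map_add]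
    congr 1
    ext <;> simp
  rw [hφ, AddChar.map_add_eq_mul, h₁, h₂, ← Complex.exp_add, mul_add]

lemma sub_mem_lagBox {n : ℕ} (p q : Fin n × Fin n) :
    ((q.1 : ℤ), (q.2 : ℤ)) - ((p.1 : ℤ), (p.2 : ℤ)) ∈ lagBox n := by
  simp only [lagBox, mem_product, mem_Icc, Prod.fst_sub, Prod.snd_sub]
  omega

-- Any modulus `N ≥ 2n - 1` keeps the lags distinct; `2n + 1` avoids `ZMod 0 = ℤ` at `n = 0`.
lemma injOn_lagBox (n : ℕ) :
    Set.InjOn ((Int.castAddHom (ZMod (2 * n + 1))).prodMap (Int.castAddHom (ZMod (2 * n + 1))))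
      (lagBox n) := by
  have hI : Set.InjOn (Int.cast : ℤ → ZMod (2 * n + 1)) (Set.Icc (-(n : ℤ) + 1) (n - 1)) :=
    ZMod.intCast_injOn_Icc (by push_cast; omega)
  rw [lagBox, coe_product, coe_Icc]
  exact hI.prodMap hI

lemma sum_sum_norm_sq_le_sum_iSup {ι κ G : Type*} [Fintype ι] [Fintype κ] [AddCommGroup G]
    [Finite G] (φ : ℤ × ℤ →+ G) (ψ : AddChar G ℂ) (n : ℕ) (d : ι → κ → ℤ → ℤ → ℝ) :
    ∑ i, ∑ j, ‖∑ h ∈ lagBox n, (d i j h.1 h.2 : ℂ) * ψ (φ h)‖ ^ 2 ≤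
      ∑ j, ⨆ ω : Set.Icc (0 : ℝ) (2 * Real.pi) × Set.Icc (0 : ℝ) (2 * Real.pi),
        ∑ i, ‖genPoly n (d i j) ω.1 ω.2‖ ^ 2 := by
  obtain ⟨ω, hω⟩ := exists_sum_lagBox_eq_genPoly φ ψ n
  have hbdd : ∀ j, BddAbove (Set.range fun ω : Set.Icc (0 : ℝ) (2 * Real.pi) ×
      Set.Icc (0 : ℝ) (2 * Real.pi) => ∑ i, ‖genPoly n (d i j) ω.1 ω.2‖ ^ 2) := fun j =>
    (isCompact_range (by unfold genPoly; fun_prop)).bddAbove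
  simp only [hω]
  rw [sum_comm]
  exact sum_le_sum fun j _ => le_ciSup (hbdd j) ω

lemma sval1_le_sqrt {ι κ : Type*} [Fintype ι] [Fintype κ] {A : Matrix ι κ ℂ} {C : ℝ}
    (hC : 0 ≤ C) (hA : ∀ v, ∑ i, ‖(A *ᵥ v) i‖ ^ 2 ≤ C * ∑ j, ‖v j‖ ^ 2) : sval1 A ≤ √C := by
  have : Nonempty {v : κ → ℂ // vnorm v ≤ 1} := ⟨⟨0, by simp [vnorm]⟩⟩
  refine ciSup_le fun ⟨v, hv⟩ => ?_
  rw [vnorm, Real.sqrt_le_one] at hv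
  exact Real.sqrt_le_sqrt ((hA v).trans (mul_le_of_le_one_right hC hv))

/-- LipBound: the largest singular value of the operator matrix `M` of a multi-channel
    convolution, whose block `(i,j)` is the doubly-block Toeplitz matrix `D(f_{i,j})`,
    satisfies `σ₁(M) ≤ √(∑_j sup_{(ω₁,ω₂) ∈ [0,2π]²} ∑_i |f_{i,j}(ω₁,ω₂)|²)`. -/
theorem conv_sval_bound (n cin cout : ℕ) (d : Fin cin → Fin cout → ℤ → ℤ → ℝ) :
    sval1 (Matrix.of fun (p : Fin cin × (Fin n × Fin n)) (q : Fin cout × (Fin n × Fin n)) =>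
        dbToep n (d p.1 q.1) p.2 q.2) ≤
      Real.sqrt (∑ j : Fin cout,
        ⨆ ω : Set.Icc (0 : ℝ) (2 * Real.pi) × Set.Icc (0 : ℝ) (2 * Real.pi),
          ∑ i : Fin cin, ‖genPoly n (d i j) ω.1 ω.2‖ ^ 2) := by
  have hpos : Function.Injective fun q : Fin n × Fin n => ((q.1 : ℤ), (q.2 : ℤ)) :=
    fun p q h => by
      simp only [Prod.mk.injEq, Nat.cast_inj, Fin.val_inj] at h
      exact Prod.ext h.1 h.2
  refine sval1_le_sqrt (sum_nonneg fun j _ => Real.iSup_nonneg fun ω => by positivity) fun v => ?_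
  simpa [Matrix.mulVec, dotProduct, Fintype.sum_prod_type, dbToep] using
    sum_norm_sq_toeplitz_le hpos sub_mem_lagBox (injOn_lagBox n) (fun i j h => (d i j h.1 h.2 : ℂ))
      (fun j q => v (j, q)) (sum_sum_norm_sq_le_sum_iSup _ · n d)
end

section
/- Decreasing the spectral norms of individual layers does not necessarily decrease the global Lipschitz constant of a ReLU network: there exist 2-layer ReLU networks N₁(x) = A⁽²⁾ρ(A⁽¹⁾x) and N₂(x) = B⁽²⁾ρ(B⁽¹⁾x) in dimension 2 with ‖B⁽¹⁾‖₂ ≤ ‖A⁽¹⁾‖₂ and ‖B⁽²⁾‖₂ > ‖A⁽²⁾‖₂, such that Lip(N₂) < Lip(N₁). Concretely, with A⁽¹⁾ = [[0,−1],[−1,0]], A⁽²⁾ = [[−1,−1],[−1,0]], B⁽¹⁾ = [[0,0],[0,−1]], B⁽²⁾ = [[−1,−1],[−1,−1]], one has Lip(N₁) = (1+√5)/2 and Lip(N₂) = √2. -/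
/-! The spectral norm `rsval1` is the operator norm on Euclidean space and ReLU is 1-Lipschitz
coordinatewise, so `Lip(x ↦ A ρ(B x)) ≤ ‖A‖₂ ‖B‖₂`. For `N₁` this gives `φ · 1`, attained between
`0` and `(-1, -φ)`, where both hidden units are active. For `N₂` the product bound
`‖B₂‖₂ ‖B₁‖₂ = 2` is not sharp: the first hidden unit is identically zero, so only the second column
of `B₂`, of norm `√2`, acts; and `√2 < φ < 2`. -/

open scoped BigOperators

/-- Euclidean norm of a real vector. -/
noncomputable def rvnorm {ι : Type*} [Fintype ι] (v : ι → ℝ) : ℝ :=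
  Real.sqrt (∑ i, v i ^ 2)

/-- Largest singular value (spectral norm) of a real matrix. -/
noncomputable def rsval1 {ι κ : Type*} [Fintype ι] [Fintype κ] (A : Matrix ι κ ℝ) : ℝ :=
  ⨆ v : {v : κ → ℝ // rvnorm v ≤ 1}, rvnorm (A.mulVec v.1)

/-- Coordinatewise ReLU. -/
def relu {ι : Type*} (v : ι → ℝ) : ι → ℝ := fun i => max 0 (v i)

/-- Euclidean Lipschitz constant of a map `ℝ² → ℝ²`. -/
noncomputable def lipConst (f : (Fin 2 → ℝ) → (Fin 2 → ℝ)) : ℝ :=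
  sSup {r : ℝ | ∃ x y : Fin 2 → ℝ, x ≠ y ∧ r = rvnorm (f x - f y) / rvnorm (x - y)}

open Matrix Real goldenRatio

lemma sq_relu_sub_relu_le {ι : Type*} (u v : ι → ℝ) (i : ι) :
    (relu u i - relu v i) ^ 2 ≤ (u i - v i) ^ 2 :=
  sq_le_sq.mpr (by simpa [relu, max_comm] using abs_max_sub_max_le_abs (u i) (v i) 0)

section Norms

variable {ι κ μ : Type*} [Fintype ι] [Fintype κ] [Fintype μ]

lemma rvnorm_eq_norm_toLp (v : ι → ℝ) : rvnorm v = ‖WithLp.toLp 2 v‖ := by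
  simp [rvnorm, EuclideanSpace.norm_eq]

lemma rvnorm_pos {v : ι → ℝ} (hv : v ≠ 0) : 0 < rvnorm v := by
  rw [rvnorm_eq_norm_toLp, norm_pos_iff]
  simpa using hv

lemma mul_rvnorm {v : ι → ℝ} {C : ℝ} (hC : 0 ≤ C) :
    C * rvnorm v = √(C ^ 2 * ∑ i, v i ^ 2) := by
  rw [rvnorm, Real.sqrt_mul (sq_nonneg C), Real.sqrt_sq hC]

lemma rvnorm_le_mul_rvnorm_iff {u : ι → ℝ} {v : κ → ℝ} {C : ℝ} (hC : 0 ≤ C) :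
    rvnorm u ≤ C * rvnorm v ↔ ∑ i, u i ^ 2 ≤ C ^ 2 * ∑ j, v j ^ 2 := by
  rw [mul_rvnorm hC, rvnorm, Real.sqrt_le_sqrt_iff (by positivity)]

lemma mul_rvnorm_le_rvnorm_iff {u : ι → ℝ} {v : κ → ℝ} {C : ℝ} (hC : 0 ≤ C) :
    C * rvnorm v ≤ rvnorm u ↔ C ^ 2 * ∑ j, v j ^ 2 ≤ ∑ i, u i ^ 2 := by
  rw [mul_rvnorm hC, rvnorm, Real.sqrt_le_sqrt_iff (by positivity)]

lemma rsval1_eq_opNorm [DecidableEq κ] (A : Matrix ι κ ℝ) :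
    rsval1 A = ‖LinearMap.toContinuousLinearMap (toLpLin 2 2 A)‖ := by
  set T := LinearMap.toContinuousLinearMap (toLpLin 2 2 A)
  have : Nonempty {v : κ → ℝ // rvnorm v ≤ 1} := ⟨⟨0, by simp [rvnorm]⟩⟩
  have hT : ∀ v, rvnorm (A *ᵥ v) = ‖T (WithLp.toLp 2 v)‖ := fun v => by
    simp [T, rvnorm_eq_norm_toLp]
  have hle : ∀ v : {v : κ → ℝ // rvnorm v ≤ 1}, rvnorm (A *ᵥ v.1) ≤ ‖T‖ := fun v => by
    rw [hT]
    exact T.unit_le_opNorm _ (by rw [← rvnorm_eq_norm_toLp]; exact v.2)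
  refine le_antisymm (ciSup_le hle) ?_
  rw [← T.sSup_unitClosedBall_eq_norm]
  refine csSup_le ((Metric.nonempty_closedBall.mpr zero_le_one).image _) ?_
  rintro - ⟨x, hx, rfl⟩
  have hx' : rvnorm (WithLp.ofLp x) ≤ 1 := by
    simpa [rvnorm_eq_norm_toLp] using hx
  simpa [hT, rsval1] using
    le_ciSup ⟨‖T‖, Set.forall_mem_range.mpr hle⟩ (⟨_, hx'⟩ : {v : κ → ℝ // rvnorm v ≤ 1})

lemma rvnorm_mulVec_le (A : Matrix ι κ ℝ) (v : κ → ℝ) :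
    rvnorm (A *ᵥ v) ≤ rsval1 A * rvnorm v := by
  classical
  simpa [rsval1_eq_opNorm, rvnorm_eq_norm_toLp] using
    (LinearMap.toContinuousLinearMap (toLpLin 2 2 A)).le_opNorm (WithLp.toLp 2 v)

lemma rsval1_nonneg (A : Matrix ι κ ℝ) : 0 ≤ rsval1 A := by
  classical
  exact (rsval1_eq_opNorm A).symm ▸ norm_nonneg _

lemma rsval1_le {A : Matrix ι κ ℝ} {C : ℝ} (hC : 0 ≤ C)
    (h : ∀ v, rvnorm (A *ᵥ v) ≤ C * rvnorm v) : rsval1 A ≤ C := by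
  classical
  rw [rsval1_eq_opNorm]
  refine ContinuousLinearMap.opNorm_le_bound _ hC fun x => ?_
  simpa [rvnorm_eq_norm_toLp, toLpLin_apply] using h (WithLp.ofLp x)

lemma le_rsval1 {A : Matrix ι κ ℝ} {C : ℝ} {v : κ → ℝ} (hv : v ≠ 0)
    (h : C * rvnorm v ≤ rvnorm (A *ᵥ v)) : C ≤ rsval1 A :=
  le_of_mul_le_mul_right (h.trans (rvnorm_mulVec_le A v)) (rvnorm_pos hv)

lemma rvnorm_relu_sub_relu_le (u v : ι → ℝ) : rvnorm (relu u - relu v) ≤ rvnorm (u - v) := by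
  simpa using (rvnorm_le_mul_rvnorm_iff zero_le_one).mpr
    (by simpa using Finset.sum_le_sum fun i _ => sq_relu_sub_relu_le u v i)

lemma rvnorm_mulVec_relu_mulVec_sub_le (A : Matrix μ κ ℝ) (B : Matrix κ ι ℝ) (x y : ι → ℝ) :
    rvnorm (A *ᵥ relu (B *ᵥ x) - A *ᵥ relu (B *ᵥ y)) ≤ rsval1 A * rsval1 B * rvnorm (x - y) :=
  calc rvnorm (A *ᵥ relu (B *ᵥ x) - A *ᵥ relu (B *ᵥ y))
      ≤ rsval1 A * rvnorm (relu (B *ᵥ x) - relu (B *ᵥ y)) := by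
        rw [← mulVec_sub]; exact rvnorm_mulVec_le A _
    _ ≤ rsval1 A * rvnorm (B *ᵥ (x - y)) := by
        rw [mulVec_sub]; gcongr
        exacts [rsval1_nonneg A, rvnorm_relu_sub_relu_le _ _]
    _ ≤ rsval1 A * rsval1 B * rvnorm (x - y) := by
        rw [mul_assoc]; gcongr
        exacts [rsval1_nonneg A, rvnorm_mulVec_le B _]

end Norms

lemma lipConst_eq_of_forall_le_of_le {f : (Fin 2 → ℝ) → Fin 2 → ℝ} {L : ℝ}
    (hle : ∀ x y, rvnorm (f x - f y) ≤ L * rvnorm (x - y)) {x₀ y₀ : Fin 2 → ℝ} (hne : x₀ ≠ y₀)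
    (hge : L * rvnorm (x₀ - y₀) ≤ rvnorm (f x₀ - f y₀)) : lipConst f = L := by
  have hpos : ∀ {x y : Fin 2 → ℝ}, x ≠ y → 0 < rvnorm (x - y) := fun h =>
    rvnorm_pos (sub_ne_zero.mpr h)
  refine IsGreatest.csSup_eq ⟨⟨x₀, y₀, hne, ?_⟩, ?_⟩
  · rw [eq_div_iff (hpos hne).ne']
    exact le_antisymm hge (hle x₀ y₀)
  · rintro r ⟨x, y, hxy, rfl⟩
    exact (div_le_iff₀ (hpos hxy)).mpr (hle x y)

local notation "A₁" => (!![0, -1; -1, 0] : Matrix (Fin 2) (Fin 2) ℝ)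
local notation "A₂" => (!![-1, -1; -1, 0] : Matrix (Fin 2) (Fin 2) ℝ)
local notation "B₁" => (!![0, 0; 0, -1] : Matrix (Fin 2) (Fin 2) ℝ)
local notation "B₂" => (!![-1, -1; -1, -1] : Matrix (Fin 2) (Fin 2) ℝ)

lemma rsval1_A₁ : rsval1 A₁ = 1 := by
  refine le_antisymm (rsval1_le zero_le_one fun v => ?_) (le_rsval1 (v := ![1, 0]) ?_ ?_)
  · rw [rvnorm_le_mul_rvnorm_iff zero_le_one]
    simp only [mulVec_fin_two]
    simp [Fin.sum_univ_two, add_comm]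
  · exact fun h => by simpa using congrFun h 0
  · rw [mul_rvnorm_le_rvnorm_iff zero_le_one]
    simp only [mulVec_fin_two]
    simp [Fin.sum_univ_two]

lemma rsval1_B₁_le : rsval1 B₁ ≤ 1 := by
  refine rsval1_le zero_le_one fun v => ?_
  rw [rvnorm_le_mul_rvnorm_iff zero_le_one]
  simp only [mulVec_fin_two]
  simp [Fin.sum_univ_two]
  positivity

lemma rsval1_A₂_le : rsval1 A₂ ≤ φ := by
  refine rsval1_le goldenRatio_pos.le fun v => ?_
  rw [rvnorm_le_mul_rvnorm_iff goldenRatio_pos.le]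
  simp only [mulVec_fin_two]
  simp [Fin.sum_univ_two]
  have key : (φ + 1) * (v 0 ^ 2 + v 1 ^ 2) - ((v 0 + v 1) ^ 2 + v 0 ^ 2) =
      (φ - 1) * (v 0 - φ * v 1) ^ 2 := by
    linear_combination (2 * v 0 * v 1 - φ * v 1 ^ 2) * goldenRatio_sq
  linarith [key, mul_nonneg (sub_nonneg.mpr one_lt_goldenRatio.le) (sq_nonneg (v 0 - φ * v 1))]

lemma two_le_rsval1_B₂ : 2 ≤ rsval1 B₂ := by
  refine le_rsval1 (v := ![1, 1]) (fun h => by simpa using congrFun h 0) ?_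
  rw [mul_rvnorm_le_rvnorm_iff zero_le_two]
  simp only [mulVec_fin_two]
  simp [Fin.sum_univ_two]
  norm_num

lemma lipConst_N₁ : lipConst (fun x => A₂ *ᵥ relu (A₁ *ᵥ x)) = φ := by
  refine lipConst_eq_of_forall_le_of_le (x₀ := 0) (y₀ := ![-1, -φ]) (fun x y => ?_) ?_ ?_
  · refine (rvnorm_mulVec_relu_mulVec_sub_le _ _ x y).trans ?_
    rw [rsval1_A₁, mul_one]
    gcongr
    exacts [Real.sqrt_nonneg _, rsval1_A₂_le]
  · exact fun h => by simpa using congrFun h 0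
  · rw [mul_rvnorm_le_rvnorm_iff goldenRatio_pos.le]
    simp only [mulVec_fin_two]
    simp [Fin.sum_univ_two, relu, goldenRatio_pos.le]
    nlinarith [goldenRatio_sq]

lemma lipConst_N₂ : lipConst (fun x => B₂ *ᵥ relu (B₁ *ᵥ x)) = √2 := by
  refine lipConst_eq_of_forall_le_of_le (x₀ := 0) (y₀ := ![0, -1]) (fun x y => ?_) ?_ ?_
  · rw [rvnorm_le_mul_rvnorm_iff (Real.sqrt_nonneg 2)]
    simp only [mulVec_fin_two]
    simp [Fin.sum_univ_two]
    have h := sq_relu_sub_relu_le ![0, -x 1] ![0, -y 1] 1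
    simp [relu] at h ⊢
    nlinarith [sq_nonneg (x 0 - y 0)]
  · exact fun h => by simpa using congrFun h 1
  · rw [mul_rvnorm_le_rvnorm_iff (Real.sqrt_nonneg 2)]
    simp only [mulVec_fin_two]
    norm_num [Fin.sum_univ_two, relu]

lemma sqrt_two_lt_goldenRatio : √2 < φ := by
  rw [Real.sqrt_lt' goldenRatio_pos, goldenRatio_sq]
  linarith [one_lt_goldenRatio]

/-- Decreasing the spectral norms of individual layers need not decrease the global
    Lipschitz constant of a ReLU network: with the concrete matrices below,
    `‖B⁽¹⁾‖₂ ≤ ‖A⁽¹⁾‖₂` and `‖A⁽²⁾‖₂ < ‖B⁽²⁾‖₂`, yet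
    `Lip(N₂) = √2 < (1+√5)/2 = Lip(N₁)`. -/
theorem layerwise_lipschitz_not_global :
    ∃ A1 A2 B1 B2 : Matrix (Fin 2) (Fin 2) ℝ,
      A1 = !![0, -1; -1, 0] ∧ A2 = !![-1, -1; -1, 0] ∧
      B1 = !![0, 0; 0, -1] ∧ B2 = !![-1, -1; -1, -1] ∧
      rsval1 B1 ≤ rsval1 A1 ∧ rsval1 A2 < rsval1 B2 ∧
      lipConst (fun x => A2.mulVec (relu (A1.mulVec x))) = (1 + Real.sqrt 5) / 2 ∧
      lipConst (fun x => B2.mulVec (relu (B1.mulVec x))) = Real.sqrt 2 ∧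
      lipConst (fun x => B2.mulVec (relu (B1.mulVec x))) <
        lipConst (fun x => A2.mulVec (relu (A1.mulVec x))) := by
  refine ⟨_, _, _, _, rfl, rfl, rfl, rfl, rsval1_B₁_le.trans rsval1_A₁.ge,
    rsval1_A₂_le.trans_lt (goldenRatio_lt_two.trans_le two_le_rsval1_B₂), lipConst_N₁,
    lipConst_N₂, ?_⟩
  rw [lipConst_N₁, lipConst_N₂]
  exact sqrt_two_lt_goldenRatio
end
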